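/- arXiv:2310.17968 — 9 statements merged into one kernel-verified Lean document; each statement's English description precedes it below -/
import Mathlib

section
/- Every finite tournament on n vertices contains a transitive subtournament of size at least ⌊log₂ n⌋ + 1. -/
def IsTournamentFin {n : ℕ} (R : Fin n → Fin n → Prop) : Prop :=
  (∀ a, ¬ R a a) ∧ ∀ a b, a ≠ b → (R a b ↔ ¬ R b a)

open Classical in
lemma erdos_moser_aux {n : ℕ} (R : Fin n → Fin n → Prop) (hR : IsTournamentFin R) :
    ∀ m : ℕ, ∀ s : Finset (Fin n), s.card = m → s.Nonempty →
      ∃ t : Finset (Fin n), t ⊆ s ∧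
        (∀ a ∈ t, ∀ b ∈ t, ∀ c ∈ t, R a b → R b c → R a c) ∧
        Nat.log 2 s.card + 1 ≤ t.card := by
  intro m
  induction m using Nat.strong_induction_on with
  | _ m ih =>
    intro s hcard hne
    obtain ⟨v, hv⟩ := hne
    set k := Nat.log 2 s.card with hk
    rcases Nat.eq_zero_or_pos k with hk0 | hkpos
    · refine ⟨{v}, by simpa using hv, ?_, by simp [hk0]⟩
      intro a ha b hb c hc hab hbc
      simp only [Finset.mem_singleton] at ha hb hc
      subst ha; subst hb
      exact absurd hab (hR.1 _)
    · have hpow : 2 ^ k ≤ s.card := by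
        rw [hk]
        exact Nat.pow_log_le_self 2 (by have : 1 ≤ s.card := Finset.card_pos.mpr ⟨v, hv⟩; omega)
      set A := (s.erase v).filter (fun a => R v a) with hA
      set B := (s.erase v).filter (fun a => ¬ R v a) with hB
      have hABcard : A.card + B.card = s.card - 1 := by
        rw [hA, hB, Finset.card_filter_add_card_filter_not,
          Finset.card_erase_of_mem hv]
      have hdpos : 0 < 2 ^ (k - 1) := pow_pos (by norm_num) _
      have hmax : 2 ^ (k - 1) ≤ A.card ∨ 2 ^ (k - 1) ≤ B.card := by
        by_contra h
        push_neg at h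
        have h2 : 2 ^ k = 2 ^ (k - 1) + 2 ^ (k - 1) := by
          rw [← two_mul, ← pow_succ']
          congr 1; omega
        omega
      have key : ∀ C : Finset (Fin n), C ⊆ s.erase v → 2 ^ (k - 1) ≤ C.card →
          ∃ t : Finset (Fin n), t ⊆ C ∧
            (∀ a ∈ t, ∀ b ∈ t, ∀ c ∈ t, R a b → R b c → R a c) ∧
            k ≤ t.card := by
        intro C hCsub hCcard
        have hCne : C.Nonempty := Finset.card_pos.mp (lt_of_lt_of_le hdpos hCcard)
        have hClt : C.card < m := by
          have := Finset.card_le_card hCsub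
          rw [Finset.card_erase_of_mem hv] at this
          omega
        obtain ⟨t, hts, htr, htc⟩ := ih C.card hClt C rfl hCne
        refine ⟨t, hts, htr, ?_⟩
        have hlog : k - 1 ≤ Nat.log 2 C.card := by
          calc k - 1 = Nat.log 2 (2 ^ (k - 1)) := (Nat.log_pow (by norm_num) _).symm
          _ ≤ Nat.log 2 C.card := Nat.log_mono_right hCcard
        omega
      rcases hmax with hAc | hBc
      · obtain ⟨t, htA, htr, htc⟩ := key A (Finset.filter_subset _ _) hAc
        have hvt : ∀ a ∈ t, a ≠ v := fun a ha =>
          (Finset.mem_erase.mp ((Finset.filter_subset _ _) (htA ha))).1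
        have hRva : ∀ a ∈ t, R v a := fun a ha => (Finset.mem_filter.mp (htA ha)).2
        refine ⟨insert v t, ?_, ?_, ?_⟩
        · intro x hx
          rcases Finset.mem_insert.mp hx with rfl | hx
          · exact hv
          · exact Finset.erase_subset _ _ ((Finset.filter_subset _ _) (htA hx))
        · intro a ha b hb c hc hab hbc
          rcases Finset.mem_insert.mp ha with ha1 | ha1
          · rcases Finset.mem_insert.mp hc with hc1 | hc1
            · rcases Finset.mem_insert.mp hb with hb1 | hb1
              · rw [ha1, hb1] at hab; exact absurd hab (hR.1 _)
              · rw [hc1] at hbc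
                exact absurd (hRva b hb1) ((hR.2 _ _ (hvt b hb1)).mp hbc)
            · rw [ha1]; exact hRva c hc1
          · rcases Finset.mem_insert.mp hb with hb1 | hb1
            · rw [hb1] at hab
              exact absurd (hRva a ha1) ((hR.2 _ _ (hvt a ha1)).mp hab)
            · rcases Finset.mem_insert.mp hc with hc1 | hc1
              · rw [hc1] at hbc
                exact absurd (hRva b hb1) ((hR.2 _ _ (hvt b hb1)).mp hbc)
              · exact htr a ha1 b hb1 c hc1 hab hbc
        · rw [Finset.card_insert_of_notMem (fun h => hvt v h rfl)]
          omega
      · obtain ⟨t, htB, htr, htc⟩ := key B (Finset.filter_subset _ _) hBc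
        have hvt : ∀ a ∈ t, a ≠ v := fun a ha =>
          (Finset.mem_erase.mp ((Finset.filter_subset _ _) (htB ha))).1
        have hRav : ∀ a ∈ t, R a v := fun a ha => by
          have hnRva : ¬ R v a := (Finset.mem_filter.mp (htB ha)).2
          by_contra h
          exact hnRva ((hR.2 _ _ (Ne.symm (hvt a ha))).mpr h)
        refine ⟨insert v t, ?_, ?_, ?_⟩
        · intro x hx
          rcases Finset.mem_insert.mp hx with rfl | hx
          · exact hv
          · exact Finset.erase_subset _ _ ((Finset.filter_subset _ _) (htB hx))
        · intro a ha b hb c hc hab hbc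
          rcases Finset.mem_insert.mp ha with ha1 | ha1
          · rcases Finset.mem_insert.mp hb with hb1 | hb1
            · rw [ha1, hb1] at hab; exact absurd hab (hR.1 _)
            · rw [ha1] at hab
              exact absurd (hRav b hb1) ((hR.2 _ _ (Ne.symm (hvt b hb1))).mp hab)
          · rcases Finset.mem_insert.mp hc with hc1 | hc1
            · rw [hc1]; exact hRav a ha1
            · rcases Finset.mem_insert.mp hb with hb1 | hb1
              · rw [hb1] at hbc
                exact absurd (hRav c hc1) ((hR.2 _ _ (Ne.symm (hvt c hc1))).mp hbc)
              · exact htr a ha1 b hb1 c hc1 hab hbc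
        · rw [Finset.card_insert_of_notMem (fun h => hvt v h rfl)]
          omega

/-- Every finite tournament on `n ≥ 1` vertices contains a transitive subtournament of size
at least `⌊log₂ n⌋ + 1`. -/
theorem finite_erdos_moser {n : ℕ} (hn : 0 < n) (R : Fin n → Fin n → Prop)
    (hR : IsTournamentFin R) :
    ∃ s : Finset (Fin n),
      (∀ a ∈ s, ∀ b ∈ s, ∀ c ∈ s, R a b → R b c → R a c) ∧
      Nat.log 2 n + 1 ≤ s.card := by
  obtain ⟨t, _, htr, htc⟩ := erdos_moser_aux R hR (Finset.univ.card)
    (Finset.univ : Finset (Fin n)) rfl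
    (by simpa [Finset.univ_nonempty_iff] using Fin.pos_iff_nonempty.mp hn)
  exact ⟨t, htr, by simpa using htc⟩
end

section
/- Given a 2-coloring f : ℕ → 2, define a tournament T on ℕ by T(x,y) iff (x < y ↔ f(x) = f(y)), for x ≠ y. Then every infinite T-transitive set H is, up to removing finitely many elements, f-homogeneous; more precisely, there is a finite set F such that H \ F is f-homogeneous. -/
/-- Given `f : ℕ → 2`, the tournament `T x y ↔ x ≠ y ∧ (x < y ↔ f x = f y)` has the property
that every infinite `T`-transitive set is, up to a finite set, `f`-homogeneous. -/
theorem transitive_subtournament_almost_homogeneous (f : ℕ → Fin 2) (H : Set ℕ)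
    (hH : H.Infinite)
    (htrans : ∀ x ∈ H, ∀ y ∈ H, ∀ z ∈ H,
      (x ≠ y ∧ (x < y ↔ f x = f y)) → (y ≠ z ∧ (y < z ↔ f y = f z)) →
      (x ≠ z ∧ (x < z ↔ f x = f z))) :
    ∃ F : Finset ℕ, ∀ x ∈ H \ ↑F, ∀ y ∈ H \ ↑F, f x = f y := by
  have h2 : ∀ v : Fin 2, v ≠ 0 → v = 1 := by decide
  have h2' : ∀ v : Fin 2, v ≠ 1 → v = 0 := by decide
  by_cases hA : {x | x ∈ H ∧ f x = 0}.Infinite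
  · by_cases hB : {x | x ∈ H ∧ f x = 1}.Infinite
    · exfalso
      obtain ⟨a, ⟨haH, ha0⟩⟩ := hA.nonempty
      obtain ⟨b, ⟨hbH, hb1⟩, hab⟩ := hB.exists_gt a
      obtain ⟨c, ⟨hcH, hc0⟩, hbc⟩ := hA.exists_gt b
      have hac : f a = f c := by rw [ha0, hc0]
      have hcb : f c ≠ f b := by rw [hc0, hb1]; decide
      have hab' : f a ≠ f b := by rw [ha0, hb1]; decide
      obtain ⟨hne, hiff⟩ := htrans a haH c hcH b hbH
        ⟨by omega, iff_of_true (by omega) hac⟩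
        ⟨by omega, iff_of_false (by omega) hcb⟩
      exact hab' (hiff.mp hab)
    · rw [Set.not_infinite] at hB
      refine ⟨hB.toFinset, fun x hx y hy => ?_⟩
      have hx0 : f x = 0 := h2' _ fun h => hx.2 (hB.mem_toFinset.mpr ⟨hx.1, h⟩)
      have hy0 : f y = 0 := h2' _ fun h => hy.2 (hB.mem_toFinset.mpr ⟨hy.1, h⟩)
      rw [hx0, hy0]
  · rw [Set.not_infinite] at hA
    refine ⟨hA.toFinset, fun x hx y hy => ?_⟩
    have hx1 : f x = 1 := h2 _ fun h => hx.2 (hA.mem_toFinset.mpr ⟨hx.1, h⟩)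
    have hy1 : f y = 1 := h2 _ fun h => hy.2 (hA.mem_toFinset.mpr ⟨hy.1, h⟩)
    rw [hx1, hy1]
end

section
/- Let (P_n)_{n∈ℕ} be a decreasing sequence of large classes of subsets of ℕ. Then the intersection ⋂_n P_n is large. -/
/-- A class of subsets of ℕ is large if it is upward closed and every finite cover of ℕ
has a piece in the class. -/
def Large (L : Set (Set ℕ)) : Prop :=
  (∀ X Y : Set ℕ, X ∈ L → X ⊆ Y → Y ∈ L) ∧
  ∀ (k : ℕ) (Y : Fin k → Set ℕ), (Set.univ : Set ℕ) ⊆ ⋃ i, Y i → ∃ i, Y i ∈ L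

/-- The intersection of a decreasing sequence of large classes is large. -/
theorem large_iInter_of_decreasing (P : ℕ → Set (Set ℕ))
    (hdec : ∀ n, P (n + 1) ⊆ P n) (hlarge : ∀ n, Large (P n)) :
    Large (⋂ n, P n) := by
  have hmono : ∀ {m n : ℕ}, m ≤ n → P n ⊆ P m := by
    intro m n h
    induction h with
    | refl => exact fun _ hx => hx
    | step h ih => exact fun x hx => ih (hdec _ hx)
  constructor
  · intro X Y hX hXY
    simp only [Set.mem_iInter] at *
    exact fun n => (hlarge n).1 X Y (hX n) hXY
  · intro k Y hcov
    choose f hf using fun n => (hlarge n).2 k Y hcov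
    obtain ⟨i, hi⟩ := Finite.exists_infinite_fiber f
    refine ⟨i, Set.mem_iInter.mpr fun n => ?_⟩
    obtain ⟨m, hm, hmn⟩ := (Set.infinite_coe_iff.mp hi).exists_gt n
    have : f m = i := hm
    exact hmono hmn.le (this ▸ hf m)
end

section
/- A class L ⊆ 2^ℕ is large if and only if L is upward closed and contains a partition regular subclass. -/
def PartitionRegular (L : Set (Set ℕ)) : Prop :=
  L.Nonempty ∧
  (∀ X Y : Set ℕ, X ∈ L → X ⊆ Y → Y ∈ L) ∧
  ∀ (k : ℕ) (Y : Fin k → Set ℕ), ∀ X ∈ L, X ⊆ ⋃ i, Y i → ∃ i, Y i ∈ L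

/-- A class is large iff it is upward closed and contains a partition regular subclass. -/
theorem large_iff_contains_partitionRegular (L : Set (Set ℕ)) :
    Large L ↔
      ((∀ X Y : Set ℕ, X ∈ L → X ⊆ Y → Y ∈ L) ∧
        ∃ Q : Set (Set ℕ), Q ⊆ L ∧ PartitionRegular Q) := by
  constructor
  · rintro ⟨hup, hcov⟩
    refine ⟨hup, {X | ∀ (k : ℕ) (Y : Fin k → Set ℕ), X ⊆ ⋃ i, Y i → ∃ i, Y i ∈ L}, ?_, ?_, ?_, ?_⟩
    · -- Q ⊆ L
      intro X hX
      obtain ⟨i, hi⟩ := hX 1 (fun _ => X) (by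
        intro x hx; exact Set.mem_iUnion.2 ⟨0, hx⟩)
      exact hi
    · -- nonempty
      exact ⟨Set.univ, fun k Y h => hcov k Y h⟩
    · -- upward closed
      intro X Y hX hXY k Z hZ
      exact hX k Z (hXY.trans hZ)
    · -- partition regularity
      intro k Y X hX hXY
      by_contra hcon
      push_neg at hcon
      simp only [Set.mem_setOf_eq] at hcon
      push_neg at hcon
      choose m Z hZcov hZnot using hcon
      set σ := Σ i : Fin k, Fin (m i)
      let e : Fin (Fintype.card σ) ≃ σ := (Fintype.equivFin σ).symm
      have hsub : X ⊆ ⋃ n, Z (e n).1 (e n).2 := by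
        intro x hx
        obtain ⟨i, hi⟩ := Set.mem_iUnion.1 (hXY hx)
        obtain ⟨j, hj⟩ := Set.mem_iUnion.1 (hZcov i hi)
        exact Set.mem_iUnion.2 ⟨e.symm ⟨i, j⟩, by rw [Equiv.apply_symm_apply]; exact hj⟩
      obtain ⟨n, hn⟩ := hX (Fintype.card σ) (fun n => Z (e n).1 (e n).2) hsub
      exact hZnot (e n).1 (e n).2 hn
  · rintro ⟨hup, Q, hQL, ⟨X, hX⟩, hQup, hQpr⟩
    refine ⟨hup, fun k Y h => ?_⟩
    obtain ⟨i, hi⟩ := hQpr k Y X hX (fun x hx => h (Set.mem_univ x))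
    exact ⟨i, hQL hi⟩
end

section
/- If X is a bi-infinite subset of ℕ (both X and its complement are infinite), then L_X and L_{X̄} are both large, but L_X ∩ L_{X̄} is not large. -/
lemma LX_large (X : Set ℕ) (hX : X.Infinite) : Large {E : Set ℕ | (E ∩ X).Infinite} := by
  constructor
  · intro A B hA hAB
    exact hA.mono (Set.inter_subset_inter_left _ hAB)
  · intro k Y hcov
    by_contra h
    push_neg at h
    simp only [Set.mem_setOf_eq, Set.not_infinite] at h
    have : X ⊆ ⋃ i, (Y i ∩ X) := by
      intro x hx
      obtain ⟨_, ⟨i, rfl⟩, hxi⟩ := hcov (Set.mem_univ x)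
      exact Set.mem_iUnion.2 ⟨i, hxi, hx⟩
    exact hX ((Set.finite_iUnion h).subset this)

/-- For a bi-infinite `X`, both `L_X` and `L_{Xᶜ}` are large, but their intersection is not. -/
theorem LX_large_but_intersection_not (X : Set ℕ) (hX : X.Infinite) (hXc : Xᶜ.Infinite) :
    Large {E : Set ℕ | (E ∩ X).Infinite} ∧
    Large {E : Set ℕ | (E ∩ Xᶜ).Infinite} ∧
    ¬ Large ({E : Set ℕ | (E ∩ X).Infinite} ∩ {E : Set ℕ | (E ∩ Xᶜ).Infinite}) := by
  refine ⟨LX_large X hX, LX_large Xᶜ hXc, ?_⟩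
  rintro ⟨-, hcov⟩
  obtain ⟨i, hi⟩ := hcov 2 (fun i => if i = 0 then X else Xᶜ) (by
    intro x _
    by_cases hx : x ∈ X
    · exact Set.mem_iUnion.2 ⟨0, by simpa⟩
    · exact Set.mem_iUnion.2 ⟨1, by simpa⟩)
  fin_cases i <;> simp only [Set.mem_inter_iff, Set.mem_setOf_eq] at hi
  · exact hi.2 (by simp [Set.inter_compl_self])
  · exact hi.1 (by simp [Set.compl_inter_self])
end

section
/- Let A be a class of subsets of ℕ that is M-minimal for some countable collection of open classes, in the following abstract sense: A is large, and for every class U in a fixed countable family, either A ⊆ U or A ∩ U is not large. If moreover the family separates sets (contains L_X for every X in a given Turing ideal), then A is partition regular. (Concrete instance: every M-minimal large class of the form U_C^M is partition regular.) -/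
/-- The open class generated by a collection `W` of finite sets. -/
def OpenClass (W : Set (Finset ℕ)) : Set (Set ℕ) :=
  {Z : Set ℕ | ∃ F ∈ W, (↑F : Set ℕ) ⊆ Z}

/-- The open class of sets meeting `D`. -/
def UD (D : Set ℕ) : Set (Set ℕ) :=
  OpenClass {F | (↑F : Set ℕ) ⊆ D ∧ F.Nonempty}

lemma mem_UD {D Z : Set ℕ} : Z ∈ UD D ↔ ∃ n, n ∈ Z ∧ n ∈ D := by
  constructor
  · rintro ⟨F, ⟨hFD, n, hn⟩, hFZ⟩
    exact ⟨n, hFZ hn, hFD hn⟩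
  · rintro ⟨n, hnZ, hnD⟩
    exact ⟨{n}, ⟨by simpa using hnD, ⟨n, Finset.mem_singleton_self n⟩⟩, by simpa using hnZ⟩

lemma OpenClass_up {W : Set (Finset ℕ)} {Z Y : Set ℕ}
    (h : Z ∈ OpenClass W) (hZY : Z ⊆ Y) : Y ∈ OpenClass W := by
  obtain ⟨F, h1, h2⟩ := h
  exact ⟨F, h1, h2.trans hZY⟩

/-- Split lemma: a large class contained in a finite union of upward closed classes
has a large piece. -/
lemma split_lemma (L : Set (Set ℕ)) (hL : Large L) (n : ℕ) (C : Fin n → Set (Set ℕ))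
    (hup : ∀ i, ∀ X Y : Set ℕ, X ∈ C i → X ⊆ Y → Y ∈ C i)
    (hsub : L ⊆ ⋃ i, C i) : ∃ i, Large (C i) := by
  by_contra h
  push_neg at h
  have h2 : ∀ i, ∃ (m : ℕ) (V : Fin m → Set ℕ),
      ((Set.univ : Set ℕ) ⊆ ⋃ j, V j) ∧ ∀ j, V j ∉ C i := by
    intro i
    by_contra hc
    push_neg at hc
    exact h i ⟨hup i, fun m V hV => hc m V hV⟩
  choose m V hcov hbad using h2
  let e := (Fintype.equivFin (∀ i, Fin (m i))).symm
  have hcover : (Set.univ : Set ℕ) ⊆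
      ⋃ (t : Fin (Fintype.card (∀ i, Fin (m i)))), ⋂ i, V i ((e t) i) := by
    intro x hx
    have hx2 : ∀ i, ∃ j, x ∈ V i j := fun i => Set.mem_iUnion.mp (hcov i hx)
    choose g hg using hx2
    refine Set.mem_iUnion.mpr ⟨e.symm g, Set.mem_iInter.mpr fun i => ?_⟩
    have : e (e.symm g) = g := Equiv.apply_symm_apply e g
    rw [this]
    exact hg i
  obtain ⟨t, ht⟩ := hL.2 _ _ hcover
  obtain ⟨i, hi⟩ := Set.mem_iUnion.mp (hsub ht)
  exact hbad i ((e t) i) (hup i _ _ hi (Set.iInter_subset _ i))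

/-- A large class which is minimal with respect to every open class (for every open `U`,
either `A ⊆ U` or `A ∩ U` is not large) is partition regular. -/
theorem minimal_large_is_partitionRegular (A : Set (Set ℕ)) (hA : Large A)
    (hmin : ∀ W : Set (Finset ℕ), A ⊆ OpenClass W ∨ ¬ Large (A ∩ OpenClass W)) :
    PartitionRegular A := by
  obtain ⟨hup, hcov⟩ := hA
  -- `univ ∈ A`
  have huniv : (Set.univ : Set ℕ) ∈ A := by
    obtain ⟨i, hi⟩ := hcov 1 (fun _ => Set.univ) (fun x _ => Set.mem_iUnion.mpr ⟨0, trivial⟩)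
    exact hi
  -- `∅ ∉ A`
  have hempty : (∅ : Set ℕ) ∉ A := by
    intro h0
    have hAall : ∀ Z : Set ℕ, Z ∈ A := fun Z => hup ∅ Z h0 (Set.empty_subset Z)
    rcases hmin {({0} : Finset ℕ)} with h | h
    · obtain ⟨F, hF, hFZ⟩ := h h0
      rw [Set.mem_singleton_iff] at hF
      subst hF
      simpa using hFZ (Finset.mem_singleton_self 0)
    · apply h
      refine ⟨fun Z Y hZ hZY => ⟨hAall Y, OpenClass_up hZ.2 hZY⟩, ?_⟩
      intro k Y hY
      obtain ⟨i, hi⟩ := Set.mem_iUnion.mp (hY (Set.mem_univ 0))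
      exact ⟨i, hAall _, ⟨{0}, rfl, by simpa using hi⟩⟩
  -- key lemma: if `A ∩ UD D` is large then `A ⊆ UD D`
  have KL : ∀ D : Set ℕ, Large (A ∩ UD D) → A ⊆ UD D := by
    intro D hLg
    rcases hmin {F | (↑F : Set ℕ) ⊆ D ∧ F.Nonempty} with h | h
    · exact h
    · exact absurd hLg h
  refine ⟨⟨Set.univ, huniv⟩, hup, ?_⟩
  intro k Yf X hX hXsub
  by_contra hno
  push_neg at hno
  set T : Set ℕ := ⋃ i, Yf i with hTdef
  have hT : T ∈ A := hup X T hX hXsub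
  set D : Fin (k + 1) → Set ℕ := Fin.cons Tᶜ Yf with hDdef
  have hsub : A ⊆ ⋃ i, A ∩ UD (D i) := by
    intro Z hZ
    have hZne : Z.Nonempty := by
      rcases Set.eq_empty_or_nonempty Z with rfl | h
      · exact absurd hZ hempty
      · exact h
    obtain ⟨x, hx⟩ := hZne
    by_cases hxT : x ∈ T
    · obtain ⟨i, hi⟩ := Set.mem_iUnion.mp hxT
      refine Set.mem_iUnion.mpr ⟨i.succ, hZ, mem_UD.mpr ⟨x, hx, ?_⟩⟩
      simpa [hDdef] using hi
    · refine Set.mem_iUnion.mpr ⟨0, hZ, mem_UD.mpr ⟨x, hx, ?_⟩⟩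
      simpa [hDdef] using hxT
  obtain ⟨i, hLi⟩ := split_lemma A ⟨hup, hcov⟩ (k + 1) (fun i => A ∩ UD (D i))
    (fun i X Y hXm hXY => ⟨hup X Y hXm.1 hXY, OpenClass_up hXm.2 hXY⟩) hsub
  have hAsubU : A ⊆ UD (D i) := KL (D i) hLi
  refine Fin.cases ?_ ?_ i hLi hAsubU
  · -- i = 0 : every member of A meets Tᶜ, contradicting T ∈ A
    intro _ hsubU
    obtain ⟨x, hx1, hx2⟩ := mem_UD.mp (hsubU hT)
    exact hx2 (by simpa [hDdef] using hx1)
  · -- i = j.succ : every member of A meets Yf j, forcing Yf j ∈ A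
    intro j _ hsubU
    have hsubU' : A ⊆ UD (Yf j) := by
      simpa [hDdef] using hsubU
    have hcover2 : (Set.univ : Set ℕ) ⊆ ⋃ t, ![Yf j, (Yf j)ᶜ] t := by
      intro x _
      by_cases hx : x ∈ Yf j
      · exact Set.mem_iUnion.mpr ⟨0, hx⟩
      · exact Set.mem_iUnion.mpr ⟨1, hx⟩
    obtain ⟨t, ht⟩ := hcov 2 _ hcover2
    fin_cases t
    · exact hno j ht
    · obtain ⟨x, hx1, hx2⟩ := mem_UD.mp (hsubU' ht)
      exact hx1 hx2
end

section
/- Let T be a tournament on ℕ with added endpoints, F a finite T-transitive set, and suppose X is contained in a minimal T-interval of F and every y ∈ X makes F ∪ {y} T-transitive. Let τ ⊆ X be a finite T-transitive set and Y ⊆ X infinite with max τ < min Y and either τ →_T Y or Y →_T τ (all arrows of T go from τ to Y, or all from Y to τ). Then every y ∈ Y makes (F ∪ τ) ∪ {y} T-transitive, and Y is contained in a minimal T-interval of F ∪ τ. -/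
def IsTournament (T : ℕ → ℕ → Prop) : Prop :=
  (∀ x, ¬ T x x) ∧ ∀ x y, x ≠ y → (T x y ↔ ¬ T y x)

/-- `S` is `T`-transitive. -/
def TransOn (T : ℕ → ℕ → Prop) (S : Set ℕ) : Prop :=
  ∀ x ∈ S, ∀ y ∈ S, ∀ z ∈ S, T x y → T y z → T x z

/-- `X` is included in a minimal `T`-interval of the finite `T`-transitive set `F`
(with endpoints `±∞`): every element of `F` lies uniformly on one side of all of `X`. -/
def InMinInterval (T : ℕ → ℕ → Prop) (F X : Set ℕ) : Prop :=
  ∀ a ∈ F, (∀ x ∈ X, T a x) ∨ (∀ x ∈ X, T x a)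

lemma em_key (T : ℕ → ℕ → Prop) (hT : IsTournament T) (F S : Set ℕ)
    (hFtr : TransOn T F) (hStr : TransOn T S)
    (hside : ∀ a ∈ F, (∀ s ∈ S, T a s) ∨ (∀ s ∈ S, T s a))
    (hmix : ∀ a ∈ F, ∀ b ∈ F, ∀ s ∈ S, T a s → T s b → T a b) :
    TransOn T (F ∪ S) := by
  have neq : ∀ a b, T a b → a ≠ b := fun a b h e => hT.1 b (e ▸ h)
  have flip : ∀ a b, T a b → ¬ T b a := fun a b h =>
    (hT.2 a b (neq a b h)).mp h
  intro x hx y hy z hz hxy hyz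
  rcases hx with hx | hx <;> rcases hy with hy | hy <;> rcases hz with hz | hz
  · exact hFtr x hx y hy z hz hxy hyz
  · -- x,y ∈ F, z ∈ S
    rcases hside x hx with h | h
    · exact h z hz
    · rcases hside y hy with h' | h'
      · exact absurd (hmix y hy x hx z hz (h' z hz) (h z hz)) (flip x y hxy)
      · exact absurd hyz (flip z y (h' z hz))
  · -- x ∈ F, y ∈ S, z ∈ F
    exact hmix x hx z hz y hy hxy hyz
  · -- x ∈ F, y,z ∈ S
    rcases hside x hx with h | h
    · exact h z hz
    · exact absurd hxy (flip y x (h y hy))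
  · -- x ∈ S, y,z ∈ F
    rcases hside z hz with h | h
    · exact absurd hyz (flip z y (hmix z hz y hy x hx (h x hx) hxy))
    · exact h x hx
  · -- x ∈ S, y ∈ F, z ∈ S
    rcases hside y hy with h | h
    · exact absurd hxy (flip y x (h x hx))
    · exact absurd hyz (flip z y (h z hz))
  · -- x,y ∈ S, z ∈ F
    rcases hside z hz with h | h
    · exact absurd hyz (flip z y (h y hy))
    · exact h x hx
  · exact hStr x hx y hy z hz hxy hyz

/-- Core extension combinatorics of the Erdős–Moser theorem: extending a partial transitive
tournament by a block `τ` while keeping a reservoir `Y` on one side. -/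
theorem em_condition_extension (T : ℕ → ℕ → Prop) (hT : IsTournament T)
    (F : Set ℕ) (hF : F.Finite) (hFtr : TransOn T F)
    (X : Set ℕ) (hXmin : InMinInterval T F X)
    (hXext : ∀ y ∈ X, TransOn T (F ∪ {y}))
    (τ : Set ℕ) (hτX : τ ⊆ X) (hτfin : τ.Finite) (hτtr : TransOn T τ)
    (Y : Set ℕ) (hYX : Y ⊆ X) (hYinf : Y.Infinite)
    (hlt : ∀ a ∈ τ, ∀ y ∈ Y, a < y)
    (harrow : (∀ a ∈ τ, ∀ y ∈ Y, T a y) ∨ (∀ a ∈ τ, ∀ y ∈ Y, T y a)) :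
    (∀ y ∈ Y, TransOn T ((F ∪ τ) ∪ {y})) ∧ InMinInterval T (F ∪ τ) Y := by
  have neq : ∀ a b, T a b → a ≠ b := fun a b h e => hT.1 b (e ▸ h)
  have flip : ∀ a b, T a b → ¬ T b a := fun a b h =>
    (hT.2 a b (neq a b h)).mp h
  constructor
  · intro y hy
    -- τ ∪ {y} is transitive
    have hτy : TransOn T (τ ∪ {y}) := by
      apply em_key T hT τ {y} hτtr
      · intro a ha b hb c hc hab hbc
        simp only [Set.mem_singleton_iff] at ha hb hc
        subst ha hb hc
        exact absurd hab (hT.1 _)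
      · intro a ha
        rcases harrow with h | h
        · exact Or.inl (fun s hs => by
            simp only [Set.mem_singleton_iff] at hs; rw [hs]; exact h a ha y hy)
        · exact Or.inr (fun s hs => by
            simp only [Set.mem_singleton_iff] at hs; rw [hs]; exact h a ha y hy)
      · intro a ha b hb s hs has hsb
        simp only [Set.mem_singleton_iff] at hs
        rw [hs] at has hsb
        rcases harrow with h | h
        · exact absurd hsb (flip b y (h b hb y hy))
        · exact absurd has (flip y a (h a ha y hy))
    have hsub : τ ∪ {y} ⊆ X := by
      intro s hs
      rcases hs with hs | hs
      · exact hτX hs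
      · simp only [Set.mem_singleton_iff] at hs; subst hs; exact hYX hy
    have : TransOn T (F ∪ (τ ∪ {y})) := by
      apply em_key T hT F (τ ∪ {y}) hFtr hτy
      · intro a ha
        rcases hXmin a ha with h | h
        · exact Or.inl (fun s hs => h s (hsub hs))
        · exact Or.inr (fun s hs => h s (hsub hs))
      · intro a ha b hb s hs has hsb
        have := hXext s (hsub hs)
        exact this a (Or.inl ha) s (Or.inr rfl) b (Or.inl hb) has hsb
    rw [Set.union_assoc]
    exact this
  · intro a ha
    rcases ha with ha | ha
    · rcases hXmin a ha with h | h
      · exact Or.inl (fun y hy => h y (hYX hy))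
      · exact Or.inr (fun y hy => h y (hYX hy))
    · rcases harrow with h | h
      · exact Or.inl (fun y hy => h a ha y hy)
      · exact Or.inr (fun y hy => h a ha y hy)
end

section
/- Let T be a tournament on ℕ, σ a finite T-transitive set, and X an infinite set such that for all y ∈ X, σ ∪ {y} is T-transitive, and X is included in a minimal T-interval of σ. Suppose x < y < z with x ∈ σ ∪ X and y, z arising as in the four cases: x,y ∈ σ; x ∈ σ and y,z ∈ X; x,y,z ∈ a T-transitive τ ⊆ X; or x,y ∈ τ and z ∈ Y with τ →_T Y or Y →_T τ. Then {x,y,z} is not a 3-cycle of T. -/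
/-- No 3-cycle arises in any of the four cases of the Erdős–Moser extension lemma. -/
theorem em_no_three_cycle (T : ℕ → ℕ → Prop) (hT : IsTournament T)
    (σ : Set ℕ) (hσfin : σ.Finite) (hσtr : TransOn T σ)
    (X : Set ℕ) (hXinf : X.Infinite)
    (hXext : ∀ y ∈ X, TransOn T (σ ∪ {y}))
    (hXmin : InMinInterval T σ X)
    (τ : Set ℕ) (hτX : τ ⊆ X) (hτtr : TransOn T τ)
    (Y : Set ℕ) (hYX : Y ⊆ X)
    (harrow : (∀ a ∈ τ, ∀ y ∈ Y, T a y) ∨ (∀ a ∈ τ, ∀ y ∈ Y, T y a)) :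
    ∀ x y z : ℕ, x < y → y < z →
      ((x ∈ σ ∧ y ∈ σ ∧ z ∈ X) ∨
       (x ∈ σ ∧ y ∈ X ∧ z ∈ X) ∨
       (x ∈ τ ∧ y ∈ τ ∧ z ∈ τ) ∨
       (x ∈ τ ∧ y ∈ τ ∧ z ∈ Y)) →
      ¬ (T x y ∧ T y z ∧ T z x) := by
  rintro x y z hxy hyz hcase ⟨hTxy, hTyz, hTzx⟩
  have hxz : x ≠ z := (hxy.trans hyz).ne
  have hyzne : y ≠ z := hyz.ne
  obtain ⟨hirr, hasym⟩ := hT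
  rcases hcase with ⟨hx, hy, hz⟩ | ⟨hx, hy, hz⟩ | ⟨hx, hy, hz⟩ | ⟨hx, hy, hz⟩
  · have htr := hXext z hz
    have hTxz : T x z :=
      htr x (Or.inl hx) y (Or.inl hy) z (Or.inr rfl) hTxy hTyz
    exact ((hasym x z hxz).mp hTxz) hTzx
  · rcases hXmin x hx with h | h
    · exact ((hasym x z hxz).mp (h z hz)) hTzx
    · exact ((hasym y x hxy.ne.symm).mp (h y hy)) hTxy
  · exact ((hasym x z hxz).mp (hτtr x hx y hy z hz hTxy hTyz)) hTzx
  · rcases harrow with h | h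
    · exact ((hasym x z hxz).mp (h x hx z hz)) hTzx
    · exact ((hasym z y hyzne.symm).mp (h y hy z hz)) hTyz
end

section
/- If a notion of forcing (P, ≤) admits a forcing question ?⊢ such that for every condition c the set W_c = { a : c ?⊢ φ(G,a) } is definable at the same complexity level as a fixed set C that W_c cannot equal (e.g., W_c ≠ C for all c), and the forcing question satisfies: c ?⊢ ψ implies some d ≤ c forces ψ, and ¬(c ?⊢ ψ) implies some d ≤ c forces ¬ψ, then the set D_φ of conditions c such that either c forces φ(G,a) for some a ∉ C, or c forces ¬φ(G,a) for some a ∈ C, is dense in P. -/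
/-- Abstract diagonalization via a forcing question: if the forcing question meets its
specifications and for every condition `c` the set `W_c = {a | c ?⊢ φ(G,a)}` differs from
the fixed set `C`, then the set of conditions deciding `φ(G,a)` against `C` is dense. -/
theorem forcing_question_diagonalization {P : Type*} [PartialOrder P]
    (Forces ForcesNeg Question : P → ℕ → Prop) (C : Set ℕ)
    (hpos : ∀ c a, Question c a → ∃ d ≤ c, Forces d a)
    (hneg : ∀ c a, ¬ Question c a → ∃ d ≤ c, ForcesNeg d a)
    (hdiff : ∀ c, {a | Question c a} ≠ C) :
    ∀ c : P, ∃ d ≤ c,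
      (∃ a ∉ C, Forces d a) ∨ (∃ a ∈ C, ForcesNeg d a) := by
  intro c
  obtain ⟨a, ha⟩ : ∃ a, ¬ (Question c a ↔ a ∈ C) := by
    by_contra h
    push_neg at h
    exact hdiff c (Set.ext fun a => h a)
  rcases Classical.em (Question c a) with hq | hq
  · have haC : a ∉ C := fun hC => ha ⟨fun _ => hC, fun _ => hq⟩
    obtain ⟨d, hd, hf⟩ := hpos c a hq
    exact ⟨d, hd, Or.inl ⟨a, haC, hf⟩⟩
  · have haC : a ∈ C := by
      by_contra hC
      exact ha ⟨fun h => absurd h hq, fun h => absurd h hC⟩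
    obtain ⟨d, hd, hf⟩ := hneg c a hq
    exact ⟨d, hd, Or.inr ⟨a, haC, hf⟩⟩
end
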